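/- In the axiomatic system consisting of classical propositional tautologies, modus ponens, the axiom K (□(φ→ψ)→(□φ→□ψ)), the necessitation rule (from φ infer □φ), and the axiom Dual (□φ↔¬◇¬φ), the formula ◇p↔¬□¬p is NOT derivable. -/
import Mathlib


/-- Modal formulas with both □ and ◇ primitive. -/
inductive F : Type
  | var : Nat → F
  | neg : F → F
  | imp : F → F → F
  | box : F → F
  | dia : F → F
deriving DecidableEq

/-- φ ↔ ψ defined via ¬ and →. -/
def F.iff' (φ ψ : F) : F := .neg ((φ.imp ψ).imp (.neg (ψ.imp φ)))

/-- Propositional evaluation treating □- and ◇-formulas as atoms. -/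
def evalP (v : F → Prop) : F → Prop
  | .var n => v (.var n)
  | .neg φ => ¬ evalP v φ
  | .imp φ ψ => evalP v φ → evalP v ψ
  | .box φ => v (.box φ)
  | .dia φ => v (.dia φ)

/-- Instances of classical propositional tautologies. -/
def TautInst (φ : F) : Prop := ∀ v : F → Prop, evalP v φ

/-- The system K̃: classical propositional tautologies, axiom K, axiom Dual
(□φ ↔ ¬◇¬φ), modus ponens and necessitation. -/
inductive ProvKt : F → Prop
  | taut {φ} : TautInst φ → ProvKt φ
  | axK (φ ψ) : ProvKt ((F.box (φ.imp ψ)).imp ((F.box φ).imp (F.box ψ)))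
  | axDual (φ) : ProvKt ((F.box φ).iff' (F.neg (F.dia (F.neg φ))))
  | mp {φ ψ} : ProvKt (φ.imp ψ) → ProvKt φ → ProvKt ψ
  | nec {φ} : ProvKt φ → ProvKt (F.box φ)


/-- Non-standard semantics on a one-point reflexive model: ◇φ is true only
when φ is a negation ¬ψ and ψ fails. -/
def sem : F → Prop
  | .var _ => True
  | .neg φ => ¬ sem φ
  | .imp φ ψ => sem φ → sem ψ
  | .box φ => sem φ
  | .dia (.neg φ) => ¬ sem φ
  | .dia _ => False

lemma evalP_sem : ∀ φ : F, evalP sem φ ↔ sem φ := by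
  intro φ
  induction φ with
  | var n => simp [evalP]
  | neg φ ih => simp [evalP, sem, ih]
  | imp φ ψ ih1 ih2 => simp [evalP, sem, ih1, ih2]
  | box φ _ => simp [evalP]
  | dia φ _ => simp [evalP]

lemma sound {φ : F} (h : ProvKt φ) : sem φ := by
  induction h with
  | taut h => exact (evalP_sem _).mp (h sem)
  | axK φ ψ => simp [sem]
  | axDual φ => simp [F.iff', sem]
  | mp _ _ ih1 ih2 => exact ih1 ih2
  | nec _ ih => exact ih

/-- The formula ◇p ↔ ¬□¬p is not derivable in K̃. -/
theorem dual_not_derivable :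
    ¬ ProvKt ((F.dia (F.var 0)).iff' (F.neg (F.box (F.neg (F.var 0))))) := by
  intro h
  have := sound h
  simp [F.iff', sem] at this
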